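/- cov(ℳ) ≤ 𝔰(ℝ): the covering number of the meager ideal on ℝ is at most the splitting number of the reals. -/

import Mathlib

open Cardinal Filter

/-- An open set `U` *splits* `A` if both `A ∩ U` and `A \ U` are infinite. -/
def Splits {X : Type*} (U A : Set X) : Prop := (A ∩ U).Infinite ∧ (A \ U).Infinite

/-- The splitting number of a topological space: the smallest cardinality of a family of
open sets splitting every infinite subset. -/
noncomputable def splittingNumber (X : Type*) [TopologicalSpace X] : Cardinal :=
  sInf {c : Cardinal | ∃ 𝒰 : Set (Set X), (∀ U ∈ 𝒰, IsOpen U) ∧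
    (∀ A : Set X, A.Infinite → ∃ U ∈ 𝒰, Splits U A) ∧ c = #𝒰}


/-- `cov(ℳ)`: the smallest cardinality of a family of meager subsets of `ℝ` covering `ℝ`. -/
noncomputable def covMeager : Cardinal :=
  sInf {c : Cardinal | ∃ 𝒞 : Set (Set ℝ), (∀ A ∈ 𝒞, IsMeagre A) ∧
    ⋃₀ 𝒞 = Set.univ ∧ c = #𝒞}

/-!
If `𝒰` is a splitting family of open sets, the frontiers of its members are closed nowhere
dense sets covering `ℝ`: given `x`, some `U ∈ 𝒰` splits a sequence converging to `x`, so `x`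
lies in the closure of both `U` and `Uᶜ`. Hence `cov(ℳ) ≤ #𝒰`. The family of all open sets is
splitting, because every infinite set of reals contains a strictly increasing or decreasing
sequence `a`, and in the increasing case `⋃ n, Ioo (a (2n)) (a (2n+2))` splits it; so the
infimum defining `𝔰(ℝ)` is not the junk value `sInf ∅ = 0`.
-/

open Set Topology

section Splitting

variable {α : Type*} [LinearOrder α] [TopologicalSpace α] [OrderClosedTopology α]

lemma exists_isOpen_splits_of_strictMono {A : Set α} {a : ℕ → α} (ha : StrictMono a)
    (hA : ∀ n, a n ∈ A) : ∃ U, IsOpen U ∧ Splits U A := by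
  refine ⟨⋃ n, Ioo (a (2 * n)) (a (2 * n + 2)), isOpen_iUnion fun _ => isOpen_Ioo, ?_, ?_⟩
  · refine infinite_of_injective_forall_mem (f := fun n => a (2 * n + 1))
      (fun m n h => by have := ha.injective h; omega) fun n => ⟨hA _, ?_⟩
    exact mem_iUnion.2 ⟨n, ha (by omega), ha (by omega)⟩
  · refine infinite_of_injective_forall_mem (f := fun n => a (2 * n))
      (fun m n h => by have := ha.injective h; omega) fun n => ⟨hA _, ?_⟩
    simp only [mem_iUnion, mem_Ioo, ha.lt_iff_lt, not_exists, not_and, not_lt]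
    intro m
    omega

lemma exists_isOpen_splits_of_strictAnti {A : Set α} {a : ℕ → α} (ha : StrictAnti a)
    (hA : ∀ n, a n ∈ A) : ∃ U, IsOpen U ∧ Splits U A :=
  exists_isOpen_splits_of_strictMono (α := αᵒᵈ) ha.dual_right hA

lemma Set.Infinite.exists_isOpen_splits {A : Set α} (hA : A.Infinite) :
    ∃ U, IsOpen U ∧ Splits U A := by
  have := hA.to_subtype
  obtain ⟨a, ha | ha⟩ := Infinite.exists_strictMono_or_strictAnti A
  · exact exists_isOpen_splits_of_strictMono ((Subtype.strictMono_coe _).comp ha)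
      fun n => (a n).2
  · exact exists_isOpen_splits_of_strictAnti ((Subtype.strictMono_coe _).comp_strictAnti ha)
      fun n => (a n).2

end Splitting

section Frontier

variable {X : Type*} [TopologicalSpace X]

lemma mem_closure_of_infinite_subset_range {u : ℕ → X} {x : X}
    (hlim : Tendsto u atTop (𝓝 x)) {B : Set X} (hB : B.Infinite) (hBu : B ⊆ range u) :
    x ∈ closure B :=
  mem_closure_of_frequently_of_tendsto (Nat.frequently_atTop_iff_infinite.2 (hB.preimage hBu))
    hlim

lemma mem_frontier_of_splits_range {U : Set X} {u : ℕ → X} {x : X}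
    (hlim : Tendsto u atTop (𝓝 x)) (h : Splits U (range u)) : x ∈ frontier U := by
  rw [frontier_eq_closure_inter_closure]
  exact ⟨closure_mono inter_subset_right
      (mem_closure_of_infinite_subset_range hlim h.1 inter_subset_left),
    closure_mono (sdiff_subset_compl _ _)
      (mem_closure_of_infinite_subset_range hlim h.2 sdiff_subset)⟩

lemma IsOpen.isMeagre_frontier {U : Set X} (hU : IsOpen U) : IsMeagre (frontier U) := by
  refine (isClosed_frontier.isNowhereDense_iff.2 ?_).isMeagre
  rw [← frontier_compl]
  exact interior_frontier hU.isClosed_compl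

end Frontier

/-- `cov(ℳ) ≤ 𝔰(ℝ)`. -/
theorem stmt9 : covMeager ≤ splittingNumber ℝ := by
  refine le_csInf ⟨_, {U | IsOpen U}, fun _ => id, fun _ hA => hA.exists_isOpen_splits, rfl⟩ ?_
  rintro _ ⟨𝒰, hopen, hsplit, rfl⟩
  have hcover : ⋃₀ (frontier '' 𝒰) = Set.univ := by
    refine eq_univ_of_forall fun x => ?_
    obtain ⟨u, hu, -, hlim⟩ := exists_seq_strictAnti_tendsto x
    obtain ⟨U, hU, hsplitU⟩ := hsplit _ (infinite_range_of_injective hu.injective)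
    exact ⟨_, mem_image_of_mem _ hU, mem_frontier_of_splits_range hlim hsplitU⟩
  refine (csInf_le' ?_).trans (mk_image_le (f := frontier))
  refine ⟨frontier '' 𝒰, ?_, hcover, rfl⟩
  rintro _ ⟨U, hU, rfl⟩
  exact (hopen U hU).isMeagre_frontier
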